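/- For the Korányi gauge N(z,t) = (|z|^4 + t^2)^(1/4) on the Heisenberg group H^n = C^n × R with group law (z,t)∘(z',t') = (z+z', t+t'+2 Im⟨z,z'⟩), the function d_H(ξ,η) = N(η^{-1}∘ξ) satisfies the triangle inequality, i.e., d_H(ξ,ζ) ≤ d_H(ξ,η) + d_H(η,ζ) for all ξ, η, ζ ∈ H^n. -/

import Mathlib

open scoped BigOperators ComplexConjugate

/-- A point of `ℍⁿ = ℂⁿ × ℝ`. -/
abbrev HC (n : ℕ) := (Fin n → ℂ) × ℝ

/-- Heisenberg group law `(z,t)∘(z',t') = (z+z', t+t'+2 Im⟨z,z'⟩)`. -/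
noncomputable def cmul {n : ℕ} (ξ η : HC n) : HC n :=
  (ξ.1 + η.1, ξ.2 + η.2 + 2 * (∑ j, ξ.1 j * conj (η.1 j)).im)

/-- Heisenberg inverse. -/
def cinv {n : ℕ} (ξ : HC n) : HC n := (-ξ.1, -ξ.2)

/-- The Korányi gauge `N(z,t) = (|z|⁴ + t²)^(1/4)`. -/
noncomputable def NC {n : ℕ} (ξ : HC n) : ℝ :=
  ((∑ j, ‖ξ.1 j‖ ^ 2) ^ 2 + ξ.2 ^ 2) ^ ((1 : ℝ) / 4)

/-- The Korányi–Cygan distance `d_H(ξ,η) = N(η⁻¹∘ξ)`. -/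
noncomputable def dC {n : ℕ} (ξ η : HC n) : ℝ := NC (cmul (cinv η) ξ)

/-!
Cygan's argument. Send `(z,t)` to the complex number `A(z,t) = |z|² + i t`, so that
`N(z,t)² = |A(z,t)|`. The group law becomes `A(ξ∘η) = A(ξ) + A(η) + 2⟨z,z'⟩`, and Cauchy–Schwarz
with `|z|² ≤ |A(ξ)|` bounds the cross term by `2 N(ξ) N(η)`; hence `N(ξ∘η)² ≤ (N(ξ) + N(η))²`.
The triangle inequality for `d_H` is this subadditivity applied to `ζ⁻¹∘ξ = (ζ⁻¹∘η)∘(η⁻¹∘ξ)`.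
-/

namespace Heisenberg

variable {n : ℕ}

theorem cmul_assoc (ξ η ζ : HC n) : cmul (cmul ξ η) ζ = cmul ξ (cmul η ζ) := by
  simp only [cmul, Pi.add_apply, map_add, add_mul, mul_add, Finset.sum_add_distrib,
    Complex.add_im, Prod.mk.injEq]
  exact ⟨add_assoc _ _ _, by ring⟩

theorem cmul_cinv_cancel_left (η ξ : HC n) : cmul η (cmul (cinv η) ξ) = ξ := by
  have hη : (∑ j, η.1 j * conj (η.1 j)).im = 0 := by
    simp only [Complex.mul_conj, ← Complex.ofReal_sum, Complex.ofReal_im]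
  refine Prod.ext (by simp [cmul, cinv]) ?_
  simp only [cmul, cinv, Pi.add_apply, Pi.neg_apply, map_add, map_neg, mul_add, neg_mul,
    mul_neg, Finset.sum_add_distrib, Finset.sum_neg_distrib, Complex.add_im, Complex.neg_im, hη]
  ring

noncomputable def cyganCoord (ξ : HC n) : ℂ :=
  (∑ j, ‖ξ.1 j‖ ^ 2 : ℝ) + ξ.2 * Complex.I

theorem NC_sq (ξ : HC n) : NC ξ ^ 2 = ‖cyganCoord ξ‖ := by
  have h : (0 : ℝ) ≤ (∑ j, ‖ξ.1 j‖ ^ 2) ^ 2 + ξ.2 ^ 2 := by positivity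
  rw [cyganCoord, Complex.norm_add_mul_I, NC, ← Real.rpow_natCast, ← Real.rpow_mul h,
    Real.sqrt_eq_rpow]
  norm_num

theorem NC_nonneg (ξ : HC n) : 0 ≤ NC ξ := Real.rpow_nonneg (by positivity) _

theorem cyganCoord_cmul (ξ η : HC n) :
    cyganCoord (cmul ξ η) = cyganCoord ξ + cyganCoord η + 2 * ∑ j, ξ.1 j * conj (η.1 j) := by
  have hnorm (j : Fin n) : ‖ξ.1 j + η.1 j‖ ^ 2
      = ‖ξ.1 j‖ ^ 2 + ‖η.1 j‖ ^ 2 + 2 * (ξ.1 j * conj (η.1 j)).re := by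
    simp only [Complex.sq_norm, Complex.normSq_add]
  apply Complex.ext
  · simp [cyganCoord, cmul, hnorm, Finset.sum_add_distrib, ← Finset.mul_sum]
  · simp only [cyganCoord, cmul, Complex.add_im, Complex.ofReal_im, Complex.ofReal_re,
      Complex.I_im, Complex.I_re, Complex.mul_im, Complex.re_ofNat, Complex.im_ofNat]
    ring

theorem sum_norm_sq_le_NC_sq (ξ : HC n) : ∑ j, ‖ξ.1 j‖ ^ 2 ≤ NC ξ ^ 2 := by
  have h := Complex.re_le_norm (cyganCoord ξ)
  rwa [cyganCoord, Complex.add_re, Complex.ofReal_re, Complex.re_ofReal_mul, Complex.I_re,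
    mul_zero, add_zero, ← cyganCoord, ← NC_sq] at h

theorem norm_sum_mul_conj_le (z w : Fin n → ℂ) :
    ‖∑ j, z j * conj (w j)‖ ≤ √(∑ j, ‖z j‖ ^ 2) * √(∑ j, ‖w j‖ ^ 2) := by
  have h := norm_inner_le_norm (𝕜 := ℂ) (WithLp.toLp 2 w) (WithLp.toLp 2 z)
  simpa [PiLp.inner_apply, EuclideanSpace.norm_eq, mul_comm] using h

theorem norm_sum_mul_conj_le_NC_mul_NC (ξ η : HC n) :
    ‖∑ j, ξ.1 j * conj (η.1 j)‖ ≤ NC ξ * NC η := by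
  have hbound (ξ : HC n) : √(∑ j, ‖ξ.1 j‖ ^ 2) ≤ NC ξ :=
    Real.sqrt_le_iff.mpr ⟨NC_nonneg ξ, sum_norm_sq_le_NC_sq ξ⟩
  exact (norm_sum_mul_conj_le ξ.1 η.1).trans
    (mul_le_mul (hbound ξ) (hbound η) (Real.sqrt_nonneg _) (NC_nonneg ξ))

theorem NC_cmul_le (ξ η : HC n) : NC (cmul ξ η) ≤ NC ξ + NC η := by
  have hsq : NC (cmul ξ η) ^ 2 ≤ (NC ξ + NC η) ^ 2 :=
    calc NC (cmul ξ η) ^ 2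
        = ‖cyganCoord ξ + cyganCoord η + 2 * ∑ j, ξ.1 j * conj (η.1 j)‖ := by
          rw [NC_sq, cyganCoord_cmul]
      _ ≤ ‖cyganCoord ξ‖ + ‖cyganCoord η‖ + 2 * ‖∑ j, ξ.1 j * conj (η.1 j)‖ := by
          rw [← Complex.norm_two, ← norm_mul]
          exact norm_add₃_le
      _ ≤ NC ξ ^ 2 + NC η ^ 2 + 2 * (NC ξ * NC η) := by
          rw [← NC_sq, ← NC_sq]
          gcongr
          exact norm_sum_mul_conj_le_NC_mul_NC ξ η
      _ = (NC ξ + NC η) ^ 2 := by ring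
  exact (pow_le_pow_iff_left₀ (NC_nonneg _) (add_nonneg (NC_nonneg ξ) (NC_nonneg η))
    two_ne_zero).mp hsq

end Heisenberg

/-- The Korányi–Cygan gauge distance satisfies the triangle inequality. -/
theorem koranyi_triangle_inequality {n : ℕ} (ξ η ζ : HC n) :
    dC ξ ζ ≤ dC ξ η + dC η ζ := by
  have hsplit : cmul (cinv ζ) ξ = cmul (cmul (cinv ζ) η) (cmul (cinv η) ξ) := by
    rw [Heisenberg.cmul_assoc, Heisenberg.cmul_cinv_cancel_left]
  rw [dC, dC, dC, hsplit, add_comm]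
  exact Heisenberg.NC_cmul_le _ _
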